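/- arXiv:1906.04792 — 14 statements merged into one kernel-verified Lean document; each statement's English description precedes it below -/
import Mathlib

section
/- Let 𝒜 be a unital associative complex *-algebra and let C, Z ∈ 𝒜 satisfy C* = C, Z* = Z, and [Z, C] = iℏ·1 for some real number ℏ ≠ 0. Then there exists no ℂ-linear functional ω : 𝒜 → ℂ that is simultaneously normalized (ω(1) = 1), positive (ω(A·A*) is a nonnegative real number for every A ∈ 𝒜), and a solution of the constraint C (ω(A·C) = 0 for all A ∈ 𝒜). -/
/-- In a unital associative complex *-algebra with C* = C, Z* = Z and
[Z, C] = iℏ·1 (ℏ ≠ 0 real), no ℂ-linear functional is simultaneously normalized,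
positive, and a solution of the constraint C. -/
theorem stmt_0 {𝒜 : Type*} [Ring 𝒜] [Algebra ℂ 𝒜] [StarRing 𝒜] [StarModule ℂ 𝒜]
    (C Z : 𝒜) (ℏ : ℝ) (hℏ : ℏ ≠ 0)
    (hC : star C = C) (hZ : star Z = Z)
    (hcomm : Z * C - C * Z = algebraMap ℂ 𝒜 (Complex.I * ℏ)) :
    ¬ ∃ ω : 𝒜 →ₗ[ℂ] ℂ,
        ω 1 = 1 ∧
        (∀ A : 𝒜, ∃ r : ℝ, 0 ≤ r ∧ ω (A * star A) = (r : ℂ)) ∧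
        (∀ A : 𝒜, ω (A * C) = 0) := by
  rintro ⟨ω, hnorm, hpos, hcon⟩
  have hZC : ω (Z * C) = 0 := hcon Z
  have hCC : ω (C * C) = 0 := hcon C
  have hSZC : ω (star Z * C) = 0 := hcon (star Z)
  have hcommω : ω (Z * C) - ω (C * Z) = Complex.I * ℏ := by
    rw [← map_sub, hcomm, Algebra.algebraMap_eq_smul_one, map_smul, hnorm, smul_eq_mul, mul_one]
  have hCZ : ω (C * Z) = -(Complex.I * ℏ) := by
    rw [hZC] at hcommω; linear_combination -hcommω
  obtain ⟨r₀, hr₀, hr₀eq⟩ := hpos (star Z)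
  rw [star_star] at hr₀eq
  set t : ℝ := (r₀ + 1) / (ℏ ^ 2) with ht
  set lam : ℂ := -(t : ℂ) * (Complex.I * ℏ) with hlam
  obtain ⟨r, hr, hre⟩ := hpos ((lam • C) + star Z)
  have hexp : ω ((lam • C + star Z) * star (lam • C + star Z))
      = lam * ((starRingEnd ℂ) lam * ω (C * C) + ω (C * Z))
        + ((starRingEnd ℂ) lam * ω (star Z * C) + ω (star Z * Z)) := by
    rw [star_add, star_smul, star_star, hC]
    simp only [mul_add, add_mul, smul_mul_assoc, mul_smul_comm, map_add, map_smul,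
      smul_eq_mul, starRingEnd_apply]
    ring
  rw [hCC, hCZ, hSZC, hr₀eq] at hexp
  have hlamval : lam * -(Complex.I * ℏ) = -(t * ℏ ^ 2 : ℝ) := by
    rw [hlam]
    push_cast
    have : (Complex.I * ℏ) * (Complex.I * ℏ) = -(ℏ ^ 2 : ℂ) := by
      have := Complex.I_sq
      ring_nf
      rw [Complex.I_sq]
      ring
    ring_nf
    rw [Complex.I_sq]
    ring
  have htval : t * ℏ ^ 2 = r₀ + 1 := by
    rw [ht]
    field_simp
  have hval : ω ((lam • C + star Z) * star (lam • C + star Z)) = ((-1 : ℝ) : ℂ) := by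
    rw [hexp]
    simp only [mul_zero, zero_add]
    rw [hlamval, htval]
    push_cast
    ring
  rw [hre] at hval
  have : r = (-1 : ℝ) := by exact_mod_cast hval
  linarith
end

section
/- Let 𝒜 be a unital associative complex *-algebra, let Z ∈ 𝒜 satisfy Z* = Z, let Z' := {A ∈ 𝒜 : [A, Z] = 0} be its commutant, and fix t ∈ ℝ. Let 𝓕 ⊆ Z' be a unital *-subalgebra such that every B ∈ Z' can be written as B = F + (Z − t·1)·B₀ with F ∈ 𝓕 and B₀ ∈ Z'. If a ℂ-linear functional ω̄ : Z' → ℂ satisfies ω̄((Z − t·1)·A) = 0 for all A ∈ Z' and ω̄(F·F*) is a nonnegative real number for all F ∈ 𝓕, then ω̄(B·B*) is a nonnegative real number for all B ∈ Z'. -/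
/-- If a linear functional on the commutant Z' of a self-adjoint Z vanishes
on the left ideal (Z − t·1)·Z' and is positive on a unital *-subalgebra 𝓕 ⊆ Z' such that
Z' = 𝓕 + (Z − t·1)·Z', then it is positive on all of Z'. -/
theorem stmt_3 {𝒜 : Type*} [Ring 𝒜] [Algebra ℂ 𝒜] [StarRing 𝒜] [StarModule ℂ 𝒜]
    (Z : 𝒜) (hZ : star Z = Z) (t : ℝ)
    (F : StarSubalgebra ℂ 𝒜)
    (hFZ : (F : Set 𝒜) ⊆ (Subalgebra.centralizer ℂ ({Z} : Set 𝒜) : Set 𝒜))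
    (hdecomp : ∀ b : Subalgebra.centralizer ℂ ({Z} : Set 𝒜),
      ∃ f ∈ F, ∃ b₀ : Subalgebra.centralizer ℂ ({Z} : Set 𝒜),
        (b : 𝒜) = f + (Z - algebraMap ℂ 𝒜 t) * (b₀ : 𝒜))
    (ω : ↥(Subalgebra.centralizer ℂ ({Z} : Set 𝒜)) →ₗ[ℂ] ℂ)
    (hω0 : ∀ x a : Subalgebra.centralizer ℂ ({Z} : Set 𝒜),
      (x : 𝒜) = (Z - algebraMap ℂ 𝒜 t) * (a : 𝒜) → ω x = 0)
    (hωF : ∀ (x : Subalgebra.centralizer ℂ ({Z} : Set 𝒜)) (f : 𝒜), f ∈ F →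
      (x : 𝒜) = f * star f → ∃ r : ℝ, 0 ≤ r ∧ ω x = (r : ℂ)) :
    ∀ x b : Subalgebra.centralizer ℂ ({Z} : Set 𝒜),
      (x : 𝒜) = (b : 𝒜) * star (b : 𝒜) → ∃ r : ℝ, 0 ≤ r ∧ ω x = (r : ℂ) := by
  intro x b hx
  -- star (Z - t·1) = Z - t·1
  have hstarW : star (Z - algebraMap ℂ 𝒜 t) = Z - algebraMap ℂ 𝒜 t := by
    rw [star_sub, hZ, ← algebraMap_star_comm, Complex.star_def, Complex.conj_ofReal]
  -- membership in the centralizer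
  have hmem : ∀ a : 𝒜, a ∈ Subalgebra.centralizer ℂ ({Z} : Set 𝒜) ↔ Z * a = a * Z := by
    intro a
    constructor
    · intro h; exact (Subalgebra.mem_centralizer_iff ℂ).1 h Z (Set.mem_singleton Z)
    · intro h
      exact (Subalgebra.mem_centralizer_iff ℂ).2
        (by intro g hg; rw [Set.mem_singleton_iff] at hg; rw [hg]; exact h)
  have hstarS : ∀ a : 𝒜, a ∈ Subalgebra.centralizer ℂ ({Z} : Set 𝒜) →
      star a ∈ Subalgebra.centralizer ℂ ({Z} : Set 𝒜) := by
    intro a ha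
    rw [hmem] at ha ⊢
    calc Z * star a = star (a * star Z) := by rw [star_mul, star_star]
    _ = star (a * Z) := by rw [hZ]
    _ = star (Z * a) := by rw [ha]
    _ = star a * star Z := by rw [star_mul]
    _ = star a * Z := by rw [hZ]
  have hWS : Z - algebraMap ℂ 𝒜 t ∈ Subalgebra.centralizer ℂ ({Z} : Set 𝒜) := by
    rw [hmem, mul_sub, sub_mul, Algebra.commutes]
  have hWcomm : ∀ a : 𝒜, a ∈ Subalgebra.centralizer ℂ ({Z} : Set 𝒜) →
      a * (Z - algebraMap ℂ 𝒜 t) = (Z - algebraMap ℂ 𝒜 t) * a := by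
    intro a ha
    rw [hmem] at ha
    rw [mul_sub, sub_mul, ha, Algebra.commutes]
  obtain ⟨f, hfF, b₀, hb⟩ := hdecomp b
  have hfS : f ∈ Subalgebra.centralizer ℂ ({Z} : Set 𝒜) := hFZ hfF
  have hb₀S : (b₀ : 𝒜) ∈ Subalgebra.centralizer ℂ ({Z} : Set 𝒜) := b₀.2
  have hcS : f * star (b₀ : 𝒜) + (b₀ : 𝒜) * star f
      + (b₀ : 𝒜) * star (b₀ : 𝒜) * (Z - algebraMap ℂ 𝒜 t)
      ∈ Subalgebra.centralizer ℂ ({Z} : Set 𝒜) :=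
    add_mem (add_mem (mul_mem hfS (hstarS _ hb₀S)) (mul_mem hb₀S (hstarS _ hfS)))
      (mul_mem (mul_mem hb₀S (hstarS _ hb₀S)) hWS)
  have hffS : f * star f ∈ Subalgebra.centralizer ℂ ({Z} : Set 𝒜) :=
    mul_mem hfS (hstarS _ hfS)
  refine ?_
  let c : Subalgebra.centralizer ℂ ({Z} : Set 𝒜) := ⟨_, hcS⟩
  let x₁ : Subalgebra.centralizer ℂ ({Z} : Set 𝒜) := ⟨f * star f, hffS⟩
  let x₂ : Subalgebra.centralizer ℂ ({Z} : Set 𝒜) :=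
    ⟨(Z - algebraMap ℂ 𝒜 t) * (c : 𝒜), mul_mem hWS hcS⟩
  have hcomm1 : (f * star (b₀ : 𝒜)) * (Z - algebraMap ℂ 𝒜 t)
      = (Z - algebraMap ℂ 𝒜 t) * (f * star (b₀ : 𝒜)) :=
    hWcomm _ (mul_mem hfS (hstarS _ hb₀S))
  have key : (x : 𝒜) = (x₁ : 𝒜) + (x₂ : 𝒜) := by
    show (x : 𝒜) = f * star f + (Z - algebraMap ℂ 𝒜 t)
      * (f * star (b₀ : 𝒜) + (b₀ : 𝒜) * star f
        + (b₀ : 𝒜) * star (b₀ : 𝒜) * (Z - algebraMap ℂ 𝒜 t))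
    rw [hx, hb, star_add, star_mul, hstarW]
    generalize hWg : Z - algebraMap ℂ 𝒜 t = W at hcomm1 ⊢
    rw [mul_add, add_mul, add_mul, mul_add, mul_add, ← mul_assoc f, hcomm1]
    noncomm_ring
  have hxeq : x = x₁ + x₂ := Subtype.ext (by simpa using key)
  have hω2 : ω x₂ = 0 := hω0 x₂ c rfl
  obtain ⟨r, hr, hωr⟩ := hωF x₁ f hfF rfl
  exact ⟨r, hr, by rw [hxeq, map_add, hω2, add_zero, hωr]⟩
end

section
/- Let 𝒜 be a unital associative ℂ-algebra and let Z, C ∈ 𝒜 be such that [Z, C] is central in 𝒜. Then the ℂ-linear span S of the set {B·Cⁿ : B ∈ Z', n ∈ ℕ} is a unital subalgebra of 𝒜 containing Z' and C. Consequently, if the set Z' ∪ {C} generates 𝒜 as a ℂ-algebra, then every A ∈ 𝒜 can be written as a finite sum A = B₀ + B₁·C + B₂·C² + … + B_M·C^M with all B_n ∈ Z'. -/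
/-- The ℂ-linear span of the set {B·Cⁿ : B ∈ Z', n ∈ ℕ}, where Z' is the commutant of Z. -/
def powSpan {𝒜 : Type*} [Ring 𝒜] [Algebra ℂ 𝒜] (Z C : 𝒜) : Submodule ℂ 𝒜 :=
  Submodule.span ℂ
    {x : 𝒜 | ∃ B ∈ Subalgebra.centralizer ℂ ({Z} : Set 𝒜), ∃ n : ℕ, x = B * C ^ n}

section aux
variable {𝒜 : Type*} [Ring 𝒜] [Algebra ℂ 𝒜] (Z C : 𝒜)

lemma gen_mem {B : 𝒜} (hB : B ∈ Subalgebra.centralizer ℂ ({Z} : Set 𝒜)) (n : ℕ) :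
    B * C ^ n ∈ powSpan Z C :=
  Submodule.subset_span ⟨B, hB, n, rfl⟩

lemma comm_mem (hcentral : ∀ a : 𝒜, (Z * C - C * Z) * a = a * (Z * C - C * Z))
    {B : 𝒜} (hB : B ∈ Subalgebra.centralizer ℂ ({Z} : Set 𝒜)) :
    C * B - B * C ∈ Subalgebra.centralizer ℂ ({Z} : Set 𝒜) := by
  rw [Subalgebra.mem_centralizer_iff] at hB ⊢
  intro g hg
  simp only [Set.mem_singleton_iff] at hg
  rw [hg]
  have h2 : Z * B = B * Z := hB Z rfl
  have h1 := hcentral B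
  have key : Z * (C * B - B * C) - (C * B - B * C) * Z
      = ((Z * C - C * Z) * B - B * (Z * C - C * Z))
        + ((B * Z - Z * B) * C - C * (B * Z - Z * B)) := by noncomm_ring
  have hz : Z * (C * B - B * C) - (C * B - B * C) * Z = 0 := by
    rw [key, h1, h2]; noncomm_ring
  exact sub_eq_zero.mp hz

lemma leftC_mem (hcentral : ∀ a : 𝒜, (Z * C - C * Z) * a = a * (Z * C - C * Z))
    {x : 𝒜} (hx : x ∈ powSpan Z C) : C * x ∈ powSpan Z C := by
  induction hx using Submodule.span_induction with
  | mem x h =>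
    obtain ⟨B, hB, n, rfl⟩ := h
    have key : C * (B * C ^ n) = B * C ^ (n + 1) + (C * B - B * C) * C ^ n := by
      rw [pow_succ']; noncomm_ring
    rw [key]
    exact Submodule.add_mem _ (gen_mem Z C hB _) (gen_mem Z C (comm_mem Z C hcentral hB) _)
  | zero => simpa using Submodule.zero_mem (powSpan Z C)
  | add x y hx hy ihx ihy => rw [mul_add]; exact Submodule.add_mem _ ihx ihy
  | smul a x hx ih => rw [mul_smul_comm]; exact Submodule.smul_mem _ _ ih

lemma leftB_mem {B : 𝒜} (hB : B ∈ Subalgebra.centralizer ℂ ({Z} : Set 𝒜))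
    {x : 𝒜} (hx : x ∈ powSpan Z C) : B * x ∈ powSpan Z C := by
  induction hx using Submodule.span_induction with
  | mem x h =>
    obtain ⟨B', hB', n, rfl⟩ := h
    rw [← mul_assoc]
    exact gen_mem Z C (mul_mem hB hB') n
  | zero => simpa using Submodule.zero_mem (powSpan Z C)
  | add x y hx hy ihx ihy => rw [mul_add]; exact Submodule.add_mem _ ihx ihy
  | smul a x hx ih => rw [mul_smul_comm]; exact Submodule.smul_mem _ _ ih

lemma mul_mem' (hcentral : ∀ a : 𝒜, (Z * C - C * Z) * a = a * (Z * C - C * Z))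
    {x y : 𝒜} (hx : x ∈ powSpan Z C) (hy : y ∈ powSpan Z C) : x * y ∈ powSpan Z C := by
  induction hx using Submodule.span_induction with
  | mem x h =>
    obtain ⟨B, hB, n, rfl⟩ := h
    rw [mul_assoc]
    refine leftB_mem Z C hB ?_
    induction n with
    | zero => simpa using hy
    | succ k ih =>
      rw [pow_succ', mul_assoc]
      exact leftC_mem Z C hcentral ih
  | zero => simpa using Submodule.zero_mem (powSpan Z C)
  | add x y hx' hy' ihx ihy => rw [add_mul]; exact Submodule.add_mem _ ihx ihy
  | smul a x hx' ih => rw [smul_mul_assoc]; exact Submodule.smul_mem _ _ ih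

lemma pad_sum (B : ℕ → 𝒜) {M K : ℕ} (h : M ≤ K) :
    ∑ n ∈ Finset.range (M + 1), B n * C ^ n
      = ∑ n ∈ Finset.range (K + 1), (if n ≤ M then B n else 0) * C ^ n := by
  have h1 : ∑ n ∈ Finset.range (M + 1), (if n ≤ M then B n else 0) * C ^ n
      = ∑ n ∈ Finset.range (K + 1), (if n ≤ M then B n else 0) * C ^ n :=
    Finset.sum_subset (Finset.range_subset_range.mpr (by omega))
      (fun n _ hn => by rw [if_neg (by simpa [Nat.lt_succ_iff] using hn), zero_mul])
  rw [← h1]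
  exact Finset.sum_congr rfl fun n hn => by
    rw [if_pos (by simpa [Nat.lt_succ_iff] using hn)]

lemma repr_of_mem {A : 𝒜} (hA : A ∈ powSpan Z C) :
    ∃ (M : ℕ) (B : ℕ → 𝒜),
      (∀ n, B n ∈ Subalgebra.centralizer ℂ ({Z} : Set 𝒜)) ∧
      A = ∑ n ∈ Finset.range (M + 1), B n * C ^ n := by
  induction hA using Submodule.span_induction with
  | mem x h =>
    obtain ⟨B, hB, n, rfl⟩ := h
    refine ⟨n, fun k => if k = n then B else 0, fun k => ?_, ?_⟩
    · dsimp only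
      split
      · exact hB
      · exact zero_mem _
    · rw [Finset.sum_eq_single n]
      · simp
      · intro b _ hb; simp [hb]
      · intro h; exact absurd (Finset.self_mem_range_succ n) h
  | zero =>
    exact ⟨0, fun _ => 0, fun _ => Subalgebra.zero_mem _, by simp⟩
  | add x y hx hy ihx ihy =>
    obtain ⟨M, B, hBmem, hBx⟩ := ihx
    obtain ⟨N, B', hB'mem, hB'y⟩ := ihy
    refine ⟨max M N, fun n => (if n ≤ M then B n else 0) + (if n ≤ N then B' n else 0),
      fun n => add_mem (by split; exacts [hBmem n, zero_mem _])
        (by split; exacts [hB'mem n, zero_mem _]), ?_⟩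
    simp only [add_mul, Finset.sum_add_distrib]
    rw [hBx, hB'y, pad_sum C B (le_max_left M N), pad_sum C B' (le_max_right M N)]
  | smul a x hx ih =>
    obtain ⟨M, B, hBmem, hBx⟩ := ih
    refine ⟨M, fun n => a • B n, fun n => Subalgebra.smul_mem _ (hBmem n) a, ?_⟩
    rw [hBx, Finset.smul_sum]
    simp [smul_mul_assoc]

end aux

/-- If [Z, C] is central, the span S of {B·Cⁿ : B ∈ Z', n ∈ ℕ} is a unital
subalgebra containing Z' and C; consequently, if Z' ∪ {C} generates 𝒜 as a ℂ-algebra,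
every A ∈ 𝒜 is a finite sum A = Σₙ Bₙ·Cⁿ with all Bₙ ∈ Z'. -/
theorem stmt_6 {𝒜 : Type*} [Ring 𝒜] [Algebra ℂ 𝒜] (Z C : 𝒜)
    (hcentral : ∀ a : 𝒜, (Z * C - C * Z) * a = a * (Z * C - C * Z)) :
    (1 : 𝒜) ∈ powSpan Z C ∧
    (∀ x ∈ powSpan Z C, ∀ y ∈ powSpan Z C, x * y ∈ powSpan Z C) ∧
    (∀ b ∈ Subalgebra.centralizer ℂ ({Z} : Set 𝒜), b ∈ powSpan Z C) ∧
    C ∈ powSpan Z C ∧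
    (Algebra.adjoin ℂ ((Subalgebra.centralizer ℂ ({Z} : Set 𝒜) : Set 𝒜) ∪ {C}) = ⊤ →
      ∀ A : 𝒜, ∃ (M : ℕ) (B : ℕ → 𝒜),
        (∀ n, B n ∈ Subalgebra.centralizer ℂ ({Z} : Set 𝒜)) ∧
        A = ∑ n ∈ Finset.range (M + 1), B n * C ^ n) := by
  have h1 : (1 : 𝒜) ∈ powSpan Z C := by
    simpa using gen_mem Z C (Subalgebra.one_mem _) 0
  have hB : ∀ b ∈ Subalgebra.centralizer ℂ ({Z} : Set 𝒜), b ∈ powSpan Z C := fun b hb => by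
    simpa using gen_mem Z C hb 0
  have hC : C ∈ powSpan Z C := by
    simpa using gen_mem Z C (Subalgebra.one_mem _) 1
  refine ⟨h1, fun x hx y hy => mul_mem' Z C hcentral hx hy, hB, hC, fun hgen A => ?_⟩
  have hA : A ∈ powSpan Z C := by
    let T : Subalgebra ℂ 𝒜 :=
      { carrier := powSpan Z C
        mul_mem' := fun hx hy => mul_mem' Z C hcentral hx hy
        one_mem' := h1
        add_mem' := fun hx hy => Submodule.add_mem _ hx hy
        zero_mem' := Submodule.zero_mem _
        algebraMap_mem' := fun r => by
          rw [Algebra.algebraMap_eq_smul_one]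
          exact Submodule.smul_mem _ _ h1 }
    have hle : Algebra.adjoin ℂ
        ((Subalgebra.centralizer ℂ ({Z} : Set 𝒜) : Set 𝒜) ∪ {C}) ≤ T := by
      apply Algebra.adjoin_le
      rintro x (hx | hx)
      · exact hB x hx
      · simp only [Set.mem_singleton_iff] at hx; subst hx; exact hC
    exact hle (hgen ▸ Algebra.mem_top)
  exact repr_of_mem Z C hA
end

section
/- Let R be an associative ring, let C ∈ R, and define δ : R → R by δ(F) := [F, C] = FC − CF. Then for all F, B ∈ R and every integer n ≥ 1: [F, B·Cⁿ] = Σ_{i=1}^{n} binom(n, i)·(−1)^{i−1}·B·δ^{i}(F)·C^{n−i} + [F, B]·Cⁿ, where δ^{i} denotes the i-fold iterate of δ. -/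
/-!
In `Module.End ℤ R`, left multiplication by `C` equals `mulRight C - δ`, and `δ` commutes with
`mulRight C`; the binomial theorem then expands `C ^ n * F` as
`∑ (-1)^i binom(n, i) δ^i(F) C^(n-i)`. The `i = 0` term is `F * C ^ n`, so the rest of the sum is
`-[F, C ^ n]`, and `[F, B * C ^ n] = B * [F, C ^ n] + [F, B] * C ^ n` gives the theorem.
-/

section

open Finset LinearMap

variable {R : Type*} [Ring R]

theorem pow_mul_eq_sum_iterate_mul_pow (C F : R) (n : ℕ) :
    C ^ n * F = ∑ i ∈ range (n + 1),
      ((-1 : ℤ) ^ i * (n.choose i : ℤ)) • ((fun X => X * C - C * X)^[i] F * C ^ (n - i)) := by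
  set δ : Module.End ℤ R := mulRight ℤ C - mulLeft ℤ C
  have hcomm : Commute (-δ) (mulRight ℤ C) :=
    ((Commute.refl _).sub_left (commute_mulLeft_right C C)).neg_left
  have hL : mulLeft ℤ C = -δ + mulRight ℤ C := by simp [δ]
  calc C ^ n * F = (mulLeft ℤ C ^ n) F := by simp
    _ = _ := by
      rw [hL, hcomm.add_pow, LinearMap.sum_apply]
      refine sum_congr rfl fun i _ => ?_
      rw [(hcomm.pow_pow _ _).eq, ← neg_one_zsmul, smul_pow, Module.End.mul_apply,
        Module.End.natCast_apply, Module.End.mul_apply, pow_mulRight, mulRight_apply, map_nsmul,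
        LinearMap.smul_apply, Module.End.pow_apply, mul_smul, ← Nat.cast_smul_eq_nsmul ℤ,
        smul_mul_assoc, smul_mul_assoc]
      exact smul_comm _ _ _

theorem mul_pow_sub_pow_mul_eq_sum (C F : R) (n : ℕ) :
    F * C ^ n - C ^ n * F = ∑ i ∈ Icc 1 n,
      ((-1 : ℤ) ^ (i - 1) * (n.choose i : ℤ)) • ((fun X => X * C - C * X)^[i] F * C ^ (n - i)) := by
  rw [pow_mul_eq_sum_iterate_mul_pow, sum_range_succ', ← Ico_add_one_right_eq_Icc,
    sum_Ico_eq_sum_range, add_tsub_cancel_right]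
  simp only [Nat.choose_zero_right, Nat.cast_one, pow_zero, mul_one, one_smul,
    Function.iterate_zero_apply, Nat.sub_zero]
  rw [sub_add_cancel_right, ← sum_neg_distrib]
  refine sum_congr rfl fun i _ => ?_
  rw [add_comm 1 i, Nat.add_sub_cancel, ← neg_smul, pow_succ]
  ring_nf

end

theorem stmt_7_general {R : Type*} [Ring R] (C F B : R) (n : ℕ) :
    F * (B * C ^ n) - (B * C ^ n) * F =
      (∑ i ∈ Finset.Icc 1 n,
        (((-1 : ℤ) ^ (i - 1) * (n.choose i : ℤ)) •
          (B * (fun X => X * C - C * X)^[i] F * C ^ (n - i)))) +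
      (F * B - B * F) * C ^ n := by
  have hLeibniz : F * (B * C ^ n) - (B * C ^ n) * F =
      B * (F * C ^ n - C ^ n * F) + (F * B - B * F) * C ^ n := by noncomm_ring
  simp_rw [hLeibniz, mul_pow_sub_pow_mul_eq_sum, Finset.mul_sum, mul_smul_comm, mul_assoc]

/-- With δ(F) := [F, C], for every n ≥ 1:
[F, B·Cⁿ] = Σ_{i=1}^{n} binom(n,i)·(−1)^{i−1}·B·δⁱ(F)·C^{n−i} + [F, B]·Cⁿ. -/
theorem stmt_7 {R : Type*} [Ring R] (C F B : R) (n : ℕ) (hn : 1 ≤ n) :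
    F * (B * C ^ n) - (B * C ^ n) * F =
      (∑ i ∈ Finset.Icc 1 n,
        (((-1 : ℤ) ^ (i - 1) * (n.choose i : ℤ)) •
          (B * (fun X => X * C - C * X)^[i] F * C ^ (n - i)))) +
      (F * B - B * F) * C ^ n :=
  stmt_7_general C F B n
end

section
/- Let R be a unital associative ring, let C ∈ R, and define δ : R → R by δ(F) := [F, C]. For every natural number M, all B₀, …, B_M ∈ R, the element A := Σ_{n=0}^{M} B_n·Cⁿ, and every F ∈ R, there exists G ∈ R such that [F, A·C] = Σ_{n=1}^{M+1} (−1)^{n−1}·B_{n−1}·δⁿ(F) + G·C. -/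
/-!
Work in the left `R`-module `R ⧸ R·C` (for noncommutative `R`, `Ideal R` is the type of left
ideals). There `C * X ≡ -δ X`, since `X * C ≡ 0`, and hence `C ^ k * X ≡ (-1) ^ k • δ^[k] X`.
Each term of `[F, A * C]` is `F * B n * C ^ (n + 1) - B n * C ^ (n + 1) * F`, whose first part
vanishes modulo `R·C` and whose second part is thereby `-(-1) ^ (n + 1) • B n * δ^[n + 1] F`.
-/

section

variable {R : Type*} [Ring R] (C : R)

theorem mkQ_mul_self_eq_zero (r : R) : (Ideal.span {C}).mkQ (r * C) = 0 :=
  (Submodule.Quotient.mk_eq_zero _).2 (Ideal.mul_mem_left _ _ (Ideal.mem_span_singleton_self C))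

theorem mkQ_self_mul (X : R) :
    (Ideal.span {C}).mkQ (C * X) = -(Ideal.span {C}).mkQ (X * C - C * X) := by
  rw [map_sub, mkQ_mul_self_eq_zero, zero_sub, neg_neg]

theorem mkQ_pow_mul (n : ℕ) (X : R) :
    (Ideal.span {C}).mkQ (C ^ n * X) =
      (-1 : ℤ) ^ n • (Ideal.span {C}).mkQ ((fun X => X * C - C * X)^[n] X) := by
  induction n generalizing X with
  | zero => simp
  | succ n ih =>
    calc (Ideal.span {C}).mkQ (C ^ (n + 1) * X)
        = C ^ n • (Ideal.span {C}).mkQ (C * X) := by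
          rw [← map_smul, smul_eq_mul, pow_succ, mul_assoc]
      _ = -(Ideal.span {C}).mkQ (C ^ n * (X * C - C * X)) := by
          rw [mkQ_self_mul, smul_neg, ← map_smul, smul_eq_mul]
      _ = (-1 : ℤ) ^ (n + 1) • (Ideal.span {C}).mkQ ((fun X => X * C - C * X)^[n + 1] X) := by
          rw [ih, Function.iterate_succ_apply, pow_succ, mul_neg_one, neg_smul]

theorem mkQ_commutator_mul_pow_succ (F B : R) (n : ℕ) :
    (Ideal.span {C}).mkQ (F * (B * C ^ n * C) - B * C ^ n * C * F) =
      (-1 : ℤ) ^ n • (Ideal.span {C}).mkQ (B * (fun X => X * C - C * X)^[n + 1] F) := by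
  have hleft : F * (B * C ^ n * C) = (F * B * C ^ n) * C := by simp only [mul_assoc]
  have hright : B * C ^ n * C * F = B • (C ^ (n + 1) * F) := by
    simp only [pow_succ, mul_assoc, smul_eq_mul]
  rw [hleft, hright, map_sub, mkQ_mul_self_eq_zero, zero_sub, map_smul, mkQ_pow_mul, smul_comm B,
    ← map_smul, smul_eq_mul, pow_succ, mul_neg_one, neg_smul, neg_neg]

theorem exists_eq_add_mul_of_mkQ_eq {x y : R}
    (h : (Ideal.span {C}).mkQ x = (Ideal.span {C}).mkQ y) : ∃ G : R, x = y + G * C := by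
  obtain ⟨G, hG⟩ := Ideal.mem_span_singleton'.1 ((Submodule.Quotient.eq _).1 h)
  exact ⟨G, by rw [hG]; abel⟩

end

/-- With δ(F) := [F, C] and A := Σ_{n=0}^{M} Bₙ·Cⁿ, there is G ∈ R with
[F, A·C] = Σ_{n=1}^{M+1} (−1)^{n−1}·B_{n−1}·δⁿ(F) + G·C. -/
theorem stmt_8 {R : Type*} [Ring R] (C : R) (M : ℕ) (B : ℕ → R) (F : R) :
    ∃ G : R,
      F * ((∑ n ∈ Finset.range (M + 1), B n * C ^ n) * C) -
        ((∑ n ∈ Finset.range (M + 1), B n * C ^ n) * C) * F =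
      (∑ n ∈ Finset.Icc 1 (M + 1),
        ((-1 : ℤ) ^ (n - 1) • (B (n - 1) * (fun X => X * C - C * X)^[n] F))) + G * C := by
  apply exists_eq_add_mul_of_mkQ_eq
  rw [← Finset.Ico_add_one_right_eq_Icc, Finset.sum_Ico_eq_sum_range, Finset.sum_mul,
    Finset.mul_sum, Finset.sum_mul, ← Finset.sum_sub_distrib, map_sum, map_sum]
  refine Finset.sum_congr rfl fun n _ => ?_
  rw [mkQ_commutator_mul_pow_succ, map_zsmul, add_tsub_cancel_left, add_comm 1 n]
end

section
/- Let 𝒜 be a unital associative ℂ-algebra, let C_H, Z ∈ 𝒜, let Z' := {A ∈ 𝒜 : [A, Z] = 0}, and assume Z' + 𝒜C_H = 𝒜, where 𝒜C_H := {A·C_H : A ∈ 𝒜}. Let ω : 𝒜 → ℂ be a ℂ-linear functional with ω(A·C_H) = 0 for all A ∈ 𝒜 and ω(Z·B) = ω(Z)·ω(B) for all B ∈ Z'. Then ω(Z·A) = ω(Z)·ω(A) for all A ∈ 𝒜. -/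
/-- If Z' + 𝒜C_H = 𝒜 and ω annihilates 𝒜C_H and parameterizes left
multiplication by Z on Z', then ω(Z·A) = ω(Z)·ω(A) for all A ∈ 𝒜. -/
theorem stmt_10 {𝒜 : Type*} [Ring 𝒜] [Algebra ℂ 𝒜] (C_H Z : 𝒜)
    (hsum : ∀ x : 𝒜, ∃ b ∈ Subalgebra.centralizer ℂ ({Z} : Set 𝒜), ∃ a : 𝒜,
      x = b + a * C_H)
    (ω : 𝒜 →ₗ[ℂ] ℂ)
    (hωC : ∀ a : 𝒜, ω (a * C_H) = 0)
    (hpar : ∀ b ∈ Subalgebra.centralizer ℂ ({Z} : Set 𝒜), ω (Z * b) = ω Z * ω b) :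
    ∀ A : 𝒜, ω (Z * A) = ω Z * ω A := by
  intro A
  obtain ⟨b, hb, a, rfl⟩ := hsum A
  have h1 : ω (Z * (b + a * C_H)) = ω (Z * b) := by
    rw [mul_add, map_add, ← mul_assoc, hωC, add_zero]
  have h2 : ω (b + a * C_H) = ω b := by
    rw [map_add, hωC, add_zero]
  rw [h1, h2, hpar b hb]
end

section
/- Let 𝒜 be a unital associative complex *-algebra, let ℏ ≠ 0 be real, let C_H, Z ∈ 𝒜 satisfy C_H* = C_H, Z* = Z and [Z, C_H] = iℏ·1, and fix t ∈ ℝ. Let Z' := {A ∈ 𝒜 : [A, Z] = 0} and let 𝓕 ⊆ Z' be a unital *-subalgebra. Assume: (i) 𝒜 is the direct sum of the ℂ-subspaces Z' and 𝒜C_H := {A·C_H : A ∈ 𝒜} (that is, Z' + 𝒜C_H = 𝒜 and Z' ∩ 𝒜C_H = {0}); and (ii) Z' is the direct sum of the ℂ-subspaces 𝓕 and (Z − t·1)·Z' := {(Z − t·1)·B : B ∈ Z'}. Then for every ℂ-linear functional ω̃ : 𝓕 → ℂ with ω̃(1) = 1 and ω̃(F·F*) a nonnegative real for all F ∈ 𝓕,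 there exists exactly one ℂ-linear functional ω : 𝒜 → ℂ such that ω restricts to ω̃ on 𝓕, ω(Z) = t, and ω is almost-positive, i.e. ω(1) = 1, ω(A·C_H) = 0 for all A ∈ 𝒜, ω(B·B*) is a nonnegative real for all B ∈ Z', and ω(Z·A) = ω(Z)·ω(A) for all A ∈ 𝒜. -/
/-!
Every state in question vanishes on `K = (Z - t)𝒜 + 𝒜 C_H`: on `𝒜 C_H` by assumption, and on
`(Z - t)𝒜` because `ω (Z * a) = t * ω a`; conversely, for a normalized functional, vanishing on
`(Z - t)𝒜` amounts to `ω Z = t` together with multiplicativity at `Z`. The two direct-sum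
hypotheses give `𝒜 = 𝓕 ⊕ K`, so `ω` must be the extension of `ω̃` by zero on `K`. Positivity on `Z'`
is inherited from `𝓕`: for `b = f + (Z - t) c` with `f ∈ 𝓕` and `c ∈ Z'`, the element `b b*` lies
in `f f* + (Z - t)𝒜`, since `Z - t` is self-adjoint and commutes with `Z'`.
-/

theorem LinearMap.existsUnique_extension_of_isCompl {R E M : Type*} [Ring R]
    [AddCommGroup E] [Module R E] [AddCommGroup M] [Module R M] {p q : Submodule R E}
    (h : IsCompl p q) (φ : p →ₗ[R] M) :
    ∃! ω : E →ₗ[R] M, (∀ x : p, ω x = φ x) ∧ q ≤ LinearMap.ker ω :=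
  ⟨ofIsCompl h φ 0, ⟨ofIsCompl_apply_left h, fun x hx => ofIsCompl_apply_right h ⟨x, hx⟩⟩,
    fun _ ⟨hφ, hq⟩ => (ofIsCompl_eq h (fun u => (hφ u).symm) fun u => (hq u.2).symm).symm⟩

section StarRing

variable {A : Type*} [Ring A] [StarRing A]

theorem mul_star_add_mul_of_commute {W f c : A} (hW : IsSelfAdjoint W) (hf : Commute W f)
    (hc : Commute W (star c)) :
    (f + W * c) * star (f + W * c) = f * star f + W * (f * star c + c * star f + c * star c * W) :=
  calc (f + W * c) * star (f + W * c)
      = f * star f + f * star c * W + W * (c * star f + c * star c * W) := by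
        rw [star_add, star_mul, hW.star_eq]; noncomm_ring
    _ = _ := by rw [← (hf.mul_right hc).eq]; noncomm_ring

theorem map_mul_star_add_mul_of_commute {M G : Type*} [AddCommMonoid M] [FunLike G A M]
    [AddMonoidHomClass G A M] (ω : G) {W f c : A} (hω : ∀ a, ω (W * a) = 0)
    (hW : IsSelfAdjoint W) (hf : Commute W f) (hc : Commute W (star c)) :
    ω ((f + W * c) * star (f + W * c)) = ω (f * star f) := by
  rw [mul_star_add_mul_of_commute hW hf hc, map_add, hω, add_zero]

end StarRing

section Clock

variable {R A : Type*} [CommRing R] [Ring A] [Algebra R A]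

theorem sub_algebraMap_mem_centralizer (Z : A) (t : R) :
    Z - algebraMap R A t ∈ Subalgebra.centralizer R {Z} :=
  sub_mem (Subalgebra.mem_centralizer_iff R |>.mpr (by simp)) (Subalgebra.algebraMap_mem _ t)

theorem commute_sub_algebraMap_of_mem_centralizer {Z b : A} (t : R)
    (hb : b ∈ Subalgebra.centralizer R {Z}) : Commute (Z - algebraMap R A t) b :=
  Commute.sub_left ((Subalgebra.mem_centralizer_iff R).mp hb Z rfl) (Algebra.commutes t b)

theorem map_sub_algebraMap_mul (ω : A →ₗ[R] R) (Z a : A) (t : R) :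
    ω ((Z - algebraMap R A t) * a) = ω (Z * a) - t * ω a := by
  rw [sub_mul, map_sub, ← Algebra.smul_def, map_smul, smul_eq_mul]

theorem forall_map_sub_algebraMap_mul_eq_zero_iff {ω : A →ₗ[R] R} (hω : ω 1 = 1) (Z : A) (t : R) :
    (∀ a, ω ((Z - algebraMap R A t) * a) = 0) ↔ ω Z = t ∧ ∀ a, ω (Z * a) = ω Z * ω a := by
  simp only [map_sub_algebraMap_mul, sub_eq_zero]
  refine ⟨fun h => ?_, fun ⟨hZ, hmul⟩ a => hZ ▸ hmul a⟩
  have hZ : ω Z = t := by simpa [hω] using h 1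
  exact ⟨hZ, hZ ▸ h⟩

def clockKernel (C Z : A) (t : R) : Submodule R A :=
  LinearMap.range (LinearMap.mulLeft R (Z - algebraMap R A t)) ⊔
    LinearMap.range (LinearMap.mulRight R C)

theorem clockKernel_le_ker_iff (ω : A →ₗ[R] R) (C Z : A) (t : R) :
    clockKernel C Z t ≤ LinearMap.ker ω ↔
      (∀ a, ω ((Z - algebraMap R A t) * a) = 0) ∧ ∀ a, ω (a * C) = 0 := by
  simp only [clockKernel, sup_le_iff, LinearMap.range_le_ker_iff, LinearMap.ext_iff,
    LinearMap.comp_apply, LinearMap.mulLeft_apply, LinearMap.mulRight_apply,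
    LinearMap.zero_apply]

theorem isCompl_clockKernel {C Z : A} {t : R} {p : Submodule R A}
    (hpZ : ∀ f ∈ p, f ∈ Subalgebra.centralizer R {Z})
    (hsum : ∀ x : A, ∃ b ∈ Subalgebra.centralizer R {Z}, ∃ a : A, x = b + a * C)
    (hint : ∀ b ∈ Subalgebra.centralizer R {Z}, ∀ a : A, b = a * C → b = 0)
    (hsum2 : ∀ b ∈ Subalgebra.centralizer R {Z},
      ∃ f ∈ p, ∃ c ∈ Subalgebra.centralizer R {Z}, b = f + (Z - algebraMap R A t) * c)
    (hint2 : ∀ f ∈ p, (∃ c ∈ Subalgebra.centralizer R {Z},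
      f = (Z - algebraMap R A t) * c) → f = 0) :
    IsCompl p (clockKernel C Z t) := by
  constructor
  · rw [Submodule.disjoint_def]
    intro x hxp hxK
    obtain ⟨_, ⟨a, rfl⟩, _, ⟨a', rfl⟩, hx⟩ := Submodule.mem_sup.mp hxK
    obtain ⟨b, hb, a'', rfl⟩ := hsum a
    have hW := sub_algebraMap_mem_centralizer Z t
    have : x - (Z - algebraMap R A t) * b = 0 :=
      hint _ (sub_mem (hpZ x hxp) (mul_mem hW hb)) ((Z - algebraMap R A t) * a'' + a')
        (by rw [← hx]; simp only [LinearMap.mulLeft_apply, LinearMap.mulRight_apply]; noncomm_ring)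
    exact hint2 x hxp ⟨b, hb, sub_eq_zero.mp this⟩
  · rw [codisjoint_iff_le_sup]
    intro x _
    obtain ⟨b, hb, a, rfl⟩ := hsum x
    obtain ⟨f, hf, c, -, rfl⟩ := hsum2 b hb
    rw [add_assoc]
    exact Submodule.mem_sup.mpr ⟨f, hf, _, Submodule.add_mem_sup ⟨c, rfl⟩ ⟨a, rfl⟩, rfl⟩

end Clock

theorem stmt_11_general {𝒜 : Type*} [Ring 𝒜] [Algebra ℂ 𝒜] [StarRing 𝒜] [StarModule ℂ 𝒜]
    (C_H Z : 𝒜)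
    (hZ : star Z = Z)
    (t : ℝ)
    (F : StarSubalgebra ℂ 𝒜)
    (hFZ : (F : Set 𝒜) ⊆ (Subalgebra.centralizer ℂ ({Z} : Set 𝒜) : Set 𝒜))
    (hsum : ∀ x : 𝒜, ∃ b ∈ Subalgebra.centralizer ℂ ({Z} : Set 𝒜), ∃ a : 𝒜,
      x = b + a * C_H)
    (hint : ∀ b ∈ Subalgebra.centralizer ℂ ({Z} : Set 𝒜), ∀ a : 𝒜,
      b = a * C_H → b = 0)
    (hsum2 : ∀ b ∈ Subalgebra.centralizer ℂ ({Z} : Set 𝒜),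
      ∃ f ∈ F, ∃ b₀ ∈ Subalgebra.centralizer ℂ ({Z} : Set 𝒜),
        b = f + (Z - algebraMap ℂ 𝒜 t) * b₀)
    (hint2 : ∀ f ∈ F,
      (∃ b₀ ∈ Subalgebra.centralizer ℂ ({Z} : Set 𝒜),
        f = (Z - algebraMap ℂ 𝒜 t) * b₀) → f = 0)
    (μ : F →ₗ[ℂ] ℂ)
    (hμ1 : μ 1 = 1)
    (hμpos : ∀ f : F, ∃ r : ℝ, 0 ≤ r ∧ μ (f * star f) = (r : ℂ)) :
    ∃! ω : 𝒜 →ₗ[ℂ] ℂ,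
      (∀ f : F, ω (f : 𝒜) = μ f) ∧
      ω Z = (t : ℂ) ∧
      ω 1 = 1 ∧
      (∀ a : 𝒜, ω (a * C_H) = 0) ∧
      (∀ b ∈ Subalgebra.centralizer ℂ ({Z} : Set 𝒜),
        ∃ r : ℝ, 0 ≤ r ∧ ω (b * star b) = (r : ℂ)) ∧
      (∀ a : 𝒜, ω (Z * a) = ω Z * ω a) := by
  have hcompl : IsCompl (Subalgebra.toSubmodule F.toSubalgebra) (clockKernel C_H Z (t : ℂ)) :=
    isCompl_clockKernel (fun f hf => hFZ hf) hsum hint hsum2 hint2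
  have hW : IsSelfAdjoint (Z - algebraMap ℂ 𝒜 t) :=
    IsSelfAdjoint.sub hZ (.algebraMap 𝒜 (Complex.conj_ofReal t))
  refine (existsUnique_congr fun ω => ?_).mp <| LinearMap.existsUnique_extension_of_isCompl
    hcompl (μ ∘ₗ F.toSubalgebra.toSubmoduleEquiv)
  rw [clockKernel_le_ker_iff]
  constructor
  · rintro ⟨hωμ, hZt, hC⟩
    have hω1 : ω 1 = 1 := (hωμ ⟨1, F.one_mem⟩).trans hμ1
    obtain ⟨hωZ, hmul⟩ := (forall_map_sub_algebraMap_mul_eq_zero_iff hω1 Z t).mp hZt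
    refine ⟨fun f => hωμ ⟨f, f.2⟩, hωZ, hω1, hC, fun b hb => ?_, hmul⟩
    obtain ⟨f, hf, c, hc, rfl⟩ := hsum2 b hb
    rw [map_mul_star_add_mul_of_commute ω hZt hW
      (commute_sub_algebraMap_of_mem_centralizer _ (hFZ hf))
      (commute_sub_algebraMap_of_mem_centralizer _ (Set.star_mem_centralizer' ?_ hc))]
    · exact (hμpos ⟨f, hf⟩).imp fun r ⟨hr, hμr⟩ => ⟨hr, (hωμ ⟨_, _⟩).trans hμr⟩
    · simp [hZ]
  · rintro ⟨hωμ, hωZ, hω1, hC, -, hmul⟩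
    exact ⟨fun f => hωμ f, (forall_map_sub_algebraMap_mul_eq_zero_iff hω1 Z t).mpr ⟨hωZ, hmul⟩, hC⟩

/-- Given a deparameterization of C_H by the clock (Z, 𝓕) (direct sum
decompositions 𝒜 = Z' ⊕ 𝒜C_H and Z' = 𝓕 ⊕ (Z − t·1)Z'), every normalized positive
linear functional on 𝓕 extends uniquely to an almost-positive state ω on 𝒜 with
ω(Z) = t. -/
theorem stmt_11 {𝒜 : Type*} [Ring 𝒜] [Algebra ℂ 𝒜] [StarRing 𝒜] [StarModule ℂ 𝒜]
    (ℏ : ℝ) (hℏ : ℏ ≠ 0) (C_H Z : 𝒜)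
    (hCH : star C_H = C_H) (hZ : star Z = Z)
    (hcomm : Z * C_H - C_H * Z = algebraMap ℂ 𝒜 (Complex.I * ℏ))
    (t : ℝ)
    (F : StarSubalgebra ℂ 𝒜)
    (hFZ : (F : Set 𝒜) ⊆ (Subalgebra.centralizer ℂ ({Z} : Set 𝒜) : Set 𝒜))
    (hsum : ∀ x : 𝒜, ∃ b ∈ Subalgebra.centralizer ℂ ({Z} : Set 𝒜), ∃ a : 𝒜,
      x = b + a * C_H)
    (hint : ∀ b ∈ Subalgebra.centralizer ℂ ({Z} : Set 𝒜), ∀ a : 𝒜,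
      b = a * C_H → b = 0)
    (hsum2 : ∀ b ∈ Subalgebra.centralizer ℂ ({Z} : Set 𝒜),
      ∃ f ∈ F, ∃ b₀ ∈ Subalgebra.centralizer ℂ ({Z} : Set 𝒜),
        b = f + (Z - algebraMap ℂ 𝒜 t) * b₀)
    (hint2 : ∀ f ∈ F,
      (∃ b₀ ∈ Subalgebra.centralizer ℂ ({Z} : Set 𝒜),
        f = (Z - algebraMap ℂ 𝒜 t) * b₀) → f = 0)
    (μ : F →ₗ[ℂ] ℂ)
    (hμ1 : μ 1 = 1)
    (hμpos : ∀ f : F, ∃ r : ℝ, 0 ≤ r ∧ μ (f * star f) = (r : ℂ)) :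
    ∃! ω : 𝒜 →ₗ[ℂ] ℂ,
      (∀ f : F, ω (f : 𝒜) = μ f) ∧
      ω Z = (t : ℂ) ∧
      ω 1 = 1 ∧
      (∀ a : 𝒜, ω (a * C_H) = 0) ∧
      (∀ b ∈ Subalgebra.centralizer ℂ ({Z} : Set 𝒜),
        ∃ r : ℝ, 0 ≤ r ∧ ω (b * star b) = (r : ℂ)) ∧
      (∀ a : 𝒜, ω (Z * a) = ω Z * ω a) :=
  stmt_11_general C_H Z hZ t F hFZ hsum hint hsum2 hint2 μ hμ1 hμpos
end

section
/- Let 𝒜 be a unital associative complex *-algebra, let ℏ ≠ 0 be real, and let C_H, Z ∈ 𝒜 satisfy C_H* = C_H, Z* = Z, [Z, C_H] = iℏ·1, and suppose C_H is not a right zero divisor (A·C_H = 0 implies A = 0). Let Z' := {A ∈ 𝒜 : [A, Z] = 0} and 𝒜C_H := {A·C_H : A ∈ 𝒜}, and assume Z' + 𝒜C_H = 𝒜 and Z' ∩ 𝒜C_H = {0}. Let ω : 𝒜 → ℂ be a ℂ-linear functional which is almost-positive, i.e. ω(1) = 1, ω(A·C_H) = 0 for all A ∈ 𝒜, ω(B·B*)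 is a nonnegative real for all B ∈ Z', and ω(Z·A) = ω(Z)·ω(A) for all A ∈ 𝒜. Then for every O ∈ 𝒜 with [O, C_H] = 0, the value ω(O·O*) is a nonnegative real number. -/
/-- For a deparameterization of C_H (self-adjoint, non zero divisor,
canonically conjugate to the self-adjoint clock Z, with 𝒜 = Z' ⊕ 𝒜C_H), every
almost-positive state ω assigns a nonnegative real value ω(O·O*) to every Dirac
observable O (i.e. [O, C_H] = 0). -/
theorem stmt_12 {𝒜 : Type*} [Ring 𝒜] [Algebra ℂ 𝒜] [StarRing 𝒜] [StarModule ℂ 𝒜]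
    (ℏ : ℝ) (hℏ : ℏ ≠ 0) (C_H Z : 𝒜)
    (hCH : star C_H = C_H) (hZ : star Z = Z)
    (hcomm : Z * C_H - C_H * Z = algebraMap ℂ 𝒜 (Complex.I * ℏ))
    (hnzd : ∀ a : 𝒜, a * C_H = 0 → a = 0)
    (hsum : ∀ x : 𝒜, ∃ b ∈ Subalgebra.centralizer ℂ ({Z} : Set 𝒜), ∃ a : 𝒜,
      x = b + a * C_H)
    (hint : ∀ b ∈ Subalgebra.centralizer ℂ ({Z} : Set 𝒜), ∀ a : 𝒜,
      b = a * C_H → b = 0)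
    (ω : 𝒜 →ₗ[ℂ] ℂ)
    (hω1 : ω 1 = 1)
    (hωC : ∀ a : 𝒜, ω (a * C_H) = 0)
    (hωpos : ∀ b ∈ Subalgebra.centralizer ℂ ({Z} : Set 𝒜),
      ∃ r : ℝ, 0 ≤ r ∧ ω (b * star b) = (r : ℂ))
    (hωpar : ∀ a : 𝒜, ω (Z * a) = ω Z * ω a) :
    ∀ O : 𝒜, O * C_H - C_H * O = 0 → ∃ r : ℝ, 0 ≤ r ∧ ω (O * star O) = (r : ℂ) := by
  intro O hO
  obtain ⟨B, hB, A, hOd⟩ := hsum O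
  have hZB : Z * B = B * Z := by
    rw [Subalgebra.mem_centralizer_iff] at hB
    exact hB Z (Set.mem_singleton Z)
  set D := B * C_H - C_H * B with hD
  -- D commutes with Z
  have hZB0 : Z * B - B * Z = 0 := sub_eq_zero_of_eq hZB
  have hDc0 : Z * D - D * Z = 0 := by
    have expand : Z * D - D * Z =
        (Z * B - B * Z) * C_H + B * (Z * C_H - C_H * Z)
          - (Z * C_H - C_H * Z) * B - C_H * (Z * B - B * Z) := by
      rw [hD]; noncomm_ring
    rw [expand, hZB0, hcomm, zero_mul, mul_zero, zero_add, sub_zero,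
      ← Algebra.commutes, sub_self]
  have hDmem : D ∈ Subalgebra.centralizer ℂ ({Z} : Set 𝒜) := by
    rw [Subalgebra.mem_centralizer_iff]
    intro g hg
    rw [Set.mem_singleton_iff] at hg
    subst hg
    exact sub_eq_zero.mp hDc0
  -- D is in the ideal
  have hDeq : D = (C_H * A - A * C_H) * C_H := by
    have h1 : D - (C_H * A - A * C_H) * C_H
        = (B + A * C_H) * C_H - C_H * (B + A * C_H) := by
      rw [hD]; noncomm_ring
    rw [← hOd, hO] at h1
    exact sub_eq_zero.mp h1
  have hD0 : D = 0 := hint D hDmem (C_H * A - A * C_H) hDeq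
  have hBC : B * C_H = C_H * B := by
    have := hD0
    rw [hD] at this
    exact sub_eq_zero.mp this
  have hAC : A * C_H = C_H * A := by
    have h2 : (C_H * A - A * C_H) * C_H = 0 := by rw [← hDeq, hD0]
    have h3 := hnzd _ h2
    exact (sub_eq_zero.mp h3).symm
  -- star commutation relations
  have hCB : C_H * star B - star B * C_H = 0 := by
    have := congrArg star hBC
    rw [star_mul, star_mul, hCH] at this
    rw [this, sub_self]
  have hCA : C_H * star A - star A * C_H = 0 := by
    have := congrArg star hAC
    rw [star_mul, star_mul, hCH] at this
    rw [this, sub_self]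
  -- expansion of O * star O
  have hstarO : star O = star B + C_H * star A := by
    rw [hOd, star_add, star_mul, hCH]
  have hexp : O * star O
      = B * star B + (B * star A + A * star B + A * C_H * star A) * C_H := by
    have hdiff : (B + A * C_H) * (star B + C_H * star A)
        - (B * star B + (B * star A + A * star B + A * C_H * star A) * C_H)
        = B * (C_H * star A - star A * C_H) + A * (C_H * star B - star B * C_H)
          + A * C_H * (C_H * star A - star A * C_H) := by
      noncomm_ring
    rw [hCA, hCB, mul_zero, mul_zero, mul_zero, add_zero, add_zero] at hdiff
    rw [hOd, star_add, star_mul, hCH]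
    exact sub_eq_zero.mp hdiff
  obtain ⟨r, hr, hre⟩ := hωpos B hB
  refine ⟨r, hr, ?_⟩
  rw [hexp, map_add, hωC, add_zero, hre]
end

section
/- Let 𝒜 be a unital associative ℂ-algebra, let N, C_H ∈ 𝒜, and let A ∈ 𝒜 satisfy [A, N·C_H] = 0. Let ω : 𝒜 → ℂ be a ℂ-linear functional with ω(X·C_H) = 0 for all X ∈ 𝒜, and suppose left multiplication by N can be canceled in ω, i.e. for every B ∈ 𝒜: if ω(G·N·B) = 0 for all G ∈ 𝒜, then ω(G·B) = 0 for all G ∈ 𝒜. Then ω(B·[A, C_H]) = 0 for all B ∈ 𝒜, and consequently ω([A, B·C_H]) = 0 for all B ∈ 𝒜. -/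
/-- If [A, N·C_H] = 0, ω annihilates the left ideal generated by C_H, and
left multiplication by N can be canceled in ω, then ω(B·[A, C_H]) = 0 for all B, and
consequently ω([A, B·C_H]) = 0 for all B. -/
theorem stmt_13 {𝒜 : Type*} [Ring 𝒜] [Algebra ℂ 𝒜] (N C_H A : 𝒜)
    (hA : A * (N * C_H) - (N * C_H) * A = 0)
    (ω : 𝒜 →ₗ[ℂ] ℂ)
    (hsol : ∀ X : 𝒜, ω (X * C_H) = 0)
    (hcancel : ∀ B : 𝒜, (∀ G : 𝒜, ω (G * N * B) = 0) → ∀ G : 𝒜, ω (G * B) = 0) :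
    (∀ B : 𝒜, ω (B * (A * C_H - C_H * A)) = 0) ∧
    (∀ B : 𝒜, ω (A * (B * C_H) - (B * C_H) * A) = 0) := by
  have hswap : N * C_H * A = A * (N * C_H) := (sub_eq_zero.mp hA).symm
  have h1 : ∀ B : 𝒜, ω (B * (A * C_H - C_H * A)) = 0 := by
    have key : ∀ G : 𝒜, ω (G * N * (A * C_H - C_H * A)) = 0 := by
      intro G
      have e1 : G * N * (A * C_H - C_H * A) = (G * N * A) * C_H - G * (N * C_H * A) := by
        noncomm_ring
      have e2 : G * (A * (N * C_H)) = (G * A * N) * C_H := by noncomm_ring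
      rw [e1, hswap, e2, map_sub, hsol, hsol, sub_zero]
    exact hcancel _ key
  refine ⟨h1, fun B => ?_⟩
  have e : A * (B * C_H) - (B * C_H) * A
      = (A * B) * C_H - (B * A) * C_H + B * (A * C_H - C_H * A) := by noncomm_ring
  rw [e, map_add, map_sub, hsol, hsol, h1, sub_zero, add_zero]
end

section
/- Let 𝒜 be a unital associative complex *-algebra, let ℏ ≠ 0 be real, and let Z, E ∈ 𝒜 satisfy Z* = Z, E* = E, and [Z, E] = iℏ·1. Let A₁, A₀, H ∈ 𝒜 satisfy [Z, A₁] = 0, [Z, A₀] = 0, A₀ = A₁·H, and set C := A₁·E + A₀. Assume C* = C and (E + H)* = E + H. Then A₁* = A₁ and [A₀, A₁] = A₁·[A₁, E]. -/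
/-- A deparameterizable non-relativistic constraint C = A₁·E + A₀ with
A₀ = A₁·H, C* = C and (E + H)* = E + H has self-adjoint leading coefficient A₁ and
satisfies [A₀, A₁] = A₁·[A₁, E]. -/
theorem stmt_15 {𝒜 : Type*} [Ring 𝒜] [Algebra ℂ 𝒜] [StarRing 𝒜] [StarModule ℂ 𝒜]
    (ℏ : ℝ) (hℏ : ℏ ≠ 0) (Z E A₁ A₀ H C : 𝒜)
    (hZ : star Z = Z) (hE : star E = E)
    (hZE : Z * E - E * Z = algebraMap ℂ 𝒜 (Complex.I * ℏ))
    (hZA₁ : Z * A₁ = A₁ * Z) (hZA₀ : Z * A₀ = A₀ * Z)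
    (hA₀ : A₀ = A₁ * H)
    (hCdef : C = A₁ * E + A₀)
    (hC : star C = C)
    (hEH : star (E + H) = E + H) :
    star A₁ = A₁ ∧ A₀ * A₁ - A₁ * A₀ = A₁ * (A₁ * E - E * A₁) := by
  have hc : (Complex.I * (ℏ : ℂ)) ≠ 0 :=
    mul_ne_zero Complex.I_ne_zero (Complex.ofReal_ne_zero.mpr hℏ)
  -- [Z, C] = iℏ A₁
  have h1 : Z * C - C * Z = algebraMap ℂ 𝒜 (Complex.I * ℏ) * A₁ := by
    have e1 : Z * C - C * Z = A₁ * (Z * E - E * Z) := by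
      rw [hCdef]
      calc Z * (A₁ * E + A₀) - (A₁ * E + A₀) * Z
          = (Z * A₁) * E + (Z * A₀) - A₁ * (E * Z) - A₀ * Z := by noncomm_ring
        _ = (A₁ * Z) * E + (A₀ * Z) - A₁ * (E * Z) - A₀ * Z := by rw [hZA₁, hZA₀]
        _ = A₁ * (Z * E - E * Z) := by noncomm_ring
    rw [e1, hZE]
    exact (Algebra.commutes _ _).symm
  -- the star of the same relation gives iℏ (star A₁)
  have hconj : (starRingEnd ℂ) (Complex.I * (ℏ : ℂ)) = -(Complex.I * ℏ) := by
    simp [Complex.conj_ofReal]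
  have h2 : Z * C - C * Z = algebraMap ℂ 𝒜 (Complex.I * ℏ) * star A₁ := by
    have hstar := congrArg star h1
    rw [star_sub, star_mul, star_mul, hZ, hC, star_mul] at hstar
    have halg : star (algebraMap ℂ 𝒜 (Complex.I * ℏ))
        = -(algebraMap ℂ 𝒜 (Complex.I * ℏ)) := by
      rw [← algebraMap_star_comm]
      show algebraMap ℂ 𝒜 ((starRingEnd ℂ) (Complex.I * ℏ)) = _
      rw [hconj, map_neg]
    rw [halg] at hstar
    -- hstar : C * Z - Z * C = star A₁ * -(algebraMap ℂ 𝒜 (I*ℏ))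
    have : -(Z * C - C * Z) = -(algebraMap ℂ 𝒜 (Complex.I * ℏ) * star A₁) := by
      rw [neg_sub, hstar, mul_neg, neg_inj, ← Algebra.commutes]
    exact neg_inj.mp this
  -- cancel the nonzero scalar iℏ
  have hA1 : star A₁ = A₁ := by
    have h3 : algebraMap ℂ 𝒜 (Complex.I * ℏ) * star A₁
        = algebraMap ℂ 𝒜 (Complex.I * ℏ) * A₁ := h2.symm.trans h1
    rw [← Algebra.smul_def, ← Algebra.smul_def] at h3
    have := congrArg (fun x => (Complex.I * (ℏ:ℂ))⁻¹ • x) h3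
    simpa only [smul_smul, inv_mul_cancel₀ hc, one_smul] using this
  refine ⟨hA1, ?_⟩
  -- C = A₁ (E + H), self-adjointness gives (E+H) A₁ = A₁ (E+H)
  have hC2 : C = A₁ * (E + H) := by rw [hCdef, hA₀, mul_add]
  have hcomm : (E + H) * A₁ = A₁ * (E + H) := by
    have h4 := hC
    rw [hC2, star_mul, hEH, hA1] at h4
    exact h4
  have h5 : A₁ * (E * A₁) + A₁ * (H * A₁) = A₁ * (A₁ * E) + A₁ * (A₁ * H) := by
    have := congrArg (fun x => A₁ * x) hcomm
    simpa [mul_add, add_mul, mul_assoc] using this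
  have h6 : A₁ * H * A₁ - A₁ * (A₁ * H) = A₁ * (A₁ * E) - A₁ * (E * A₁) := by
    rw [sub_eq_sub_iff_add_eq_add, mul_assoc]
    rw [add_comm]
    exact h5
  rw [hA₀, mul_sub]
  exact h6
end

section
/- Let 𝒜 be a unital associative complex *-algebra, let ℏ ≠ 0 be real, and let Z, E ∈ 𝒜 satisfy Z* = Z, E* = E, and [Z, E] = iℏ·1. Let N₁, N₀, H ∈ 𝒜 satisfy [Z, N₁] = [Z, N₀] = [Z, H] = 0, N₁* = N₁, and H* = H. Set N := N₁·E + N₀ and assume N* = N and [N, E + H] = 0. Then: (1) N₀* = N₀ + [N₁, E]; (2) [N₁, E] + [N₁, H] = 0; and (3) N₁·[H, E] = [N₀, E] + [N₀, H]. -/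
/-- For a relativistic constraint deparameterizable by factorization with
constant real flow rate N = N₁·E + N₀ (N* = N, [N, E + H] = 0), the three compatibility
conditions hold: N₀* = N₀ + [N₁, E], [N₁, E] + [N₁, H] = 0, and
N₁·[H, E] = [N₀, E] + [N₀, H]. -/
theorem stmt_16 {𝒜 : Type*} [Ring 𝒜] [Algebra ℂ 𝒜] [StarRing 𝒜] [StarModule ℂ 𝒜]
    (ℏ : ℝ) (hℏ : ℏ ≠ 0) (Z E N₁ N₀ H N : 𝒜)
    (hZ : star Z = Z) (hE : star E = E)
    (hZE : Z * E - E * Z = algebraMap ℂ 𝒜 (Complex.I * ℏ))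
    (hZN₁ : Z * N₁ = N₁ * Z) (hZN₀ : Z * N₀ = N₀ * Z) (hZH : Z * H = H * Z)
    (hN₁ : star N₁ = N₁) (hH : star H = H)
    (hNdef : N = N₁ * E + N₀)
    (hN : star N = N)
    (hNC : N * (E + H) - (E + H) * N = 0) :
    star N₀ = N₀ + (N₁ * E - E * N₁) ∧
    (N₁ * E - E * N₁) + (N₁ * H - H * N₁) = 0 ∧
    N₁ * (H * E - E * H) = (N₀ * E - E * N₀) + (N₀ * H - H * N₀) := by
  subst hNdef
  set c : 𝒜 := algebraMap ℂ 𝒜 (Complex.I * ℏ) with hc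
  -- part 1
  have h1 : star N₀ = N₀ + (N₁ * E - E * N₁) := by
    have h := hN
    rw [star_add, star_mul, hE, hN₁] at h
    linear_combination (norm := noncomm_ring) h
  have hcomm : ∀ x : 𝒜, c * x = x * c := fun x => by rw [hc]; exact Algebra.commutes _ x
  -- part 2 key
  have key : c * ((N₁ * E - E * N₁) + (N₁ * H - H * N₁)) = 0 := by
    linear_combination (norm := noncomm_ring)
      Z * hNC - hNC * Z - hZN₁ * (E*(E+H)) - N₁ * hZE * (E+H) - N₁*E*hZE - N₁*E*hZH
      - hZN₀ * (E+H) - N₀*hZE - N₀*hZH + hZE*(N₁*E+N₀) + hZH*(N₁*E+N₀)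
      + (E+H)*hZN₁*E + (E+H)*N₁*hZE + (E+H)*hZN₀
      + hcomm N₁ * E + hcomm (N₁*E) - hcomm (E*N₁) + hcomm N₁ * H - hcomm (H*N₁) + hcomm N₀
  have hz : (Complex.I * ℏ : ℂ) ≠ 0 := by
    simp [Complex.I_ne_zero, Complex.ofReal_ne_zero, hℏ]
  have h2 : (N₁ * E - E * N₁) + (N₁ * H - H * N₁) = 0 := by
    have := key
    rw [hc, ← Algebra.smul_def] at this
    have h4 : ((Complex.I * (ℏ:ℂ))⁻¹ * (Complex.I * ℏ)) • ((N₁ * E - E * N₁) + (N₁ * H - H * N₁)) = 0 := by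
      rw [← smul_smul, this, smul_zero]
    rwa [inv_mul_cancel₀ hz, one_smul] at h4
  refine ⟨h1, h2, ?_⟩
  linear_combination (norm := noncomm_ring) h2 * E - hNC
end

section
/- Let 𝒜 be a unital associative complex *-algebra, let ℏ be real, and let Z, E ∈ 𝒜 satisfy Z* = Z, E* = E, and [Z, E] = iℏ·1. Let N₀, H ∈ 𝒜 satisfy [Z, N₀] = [Z, H] = 0, N₀* = N₀, H* = H, and [H, E] = [N₀, E] + [N₀, H]. Define A₁ := N₀ + H, Ẽ := E + (1/2)·A₁, and h := (1/4)·A₁² − (1/2)·(N₀·H + H·N₀). Then (E + N₀)·(E + H) = Ẽ² − h, with Ẽ* = Ẽ, h* = h, [Z, Ẽ] = iℏ·1, and [Z, h] = 0. -/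
/-- A relativistic constraint of real constant flow rate N = E + N₀ can be
completed to a square: with A₁ := N₀ + H, Ẽ := E + ½A₁ and
h := ¼A₁² − ½(N₀H + HN₀), one has (E + N₀)(E + H) = Ẽ² − h, with Ẽ* = Ẽ, h* = h,
[Z, Ẽ] = iℏ·1 and [Z, h] = 0. -/
theorem stmt_17 {𝒜 : Type*} [Ring 𝒜] [Algebra ℂ 𝒜] [StarRing 𝒜] [StarModule ℂ 𝒜]
    (ℏ : ℝ) (Z E N₀ H A₁ E' h : 𝒜)
    (hZ : star Z = Z) (hE : star E = E)
    (hZE : Z * E - E * Z = algebraMap ℂ 𝒜 (Complex.I * ℏ))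
    (hZN₀ : Z * N₀ = N₀ * Z) (hZH : Z * H = H * Z)
    (hN₀ : star N₀ = N₀) (hH : star H = H)
    (hcond : H * E - E * H = (N₀ * E - E * N₀) + (N₀ * H - H * N₀))
    (hA₁ : A₁ = N₀ + H)
    (hE' : E' = E + (1 / 2 : ℂ) • A₁)
    (hh : h = (1 / 4 : ℂ) • (A₁ * A₁) - (1 / 2 : ℂ) • (N₀ * H + H * N₀)) :
    (E + N₀) * (E + H) = E' * E' - h ∧
    star E' = E' ∧ star h = h ∧
    Z * E' - E' * Z = algebraMap ℂ 𝒜 (Complex.I * ℏ) ∧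
    Z * h = h * Z := by
  subst hA₁ hE' hh
  refine ⟨?_, ?_, ?_, ?_, ?_⟩
  · have key : H * E - E * H - ((N₀ * E - E * N₀) + (N₀ * H - H * N₀)) = 0 := by
      rw [hcond, sub_self]
    have expand : (E + (1 / 2 : ℂ) • (N₀ + H)) * (E + (1 / 2 : ℂ) • (N₀ + H)) -
        ((1 / 4 : ℂ) • ((N₀ + H) * (N₀ + H)) - (1 / 2 : ℂ) • (N₀ * H + H * N₀)) -
        (E + N₀) * (E + H) =
        (1 / 2 : ℂ) • (H * E - E * H - ((N₀ * E - E * N₀) + (N₀ * H - H * N₀))) := by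
      simp only [mul_add, add_mul, smul_mul_assoc, mul_smul_comm, smul_add, smul_sub,
        smul_smul]
      module
    rw [key, smul_zero, sub_eq_zero] at expand
    exact expand.symm
  · simp [star_smul, hE, hN₀, hH]
  · simp [star_smul, star_sub, star_mul, hN₀, hH, add_comm]
  · have hZA : Z * (N₀ + H) = (N₀ + H) * Z := by rw [mul_add, add_mul, hZN₀, hZH]
    calc Z * (E + (1 / 2 : ℂ) • (N₀ + H)) - (E + (1 / 2 : ℂ) • (N₀ + H)) * Z
        = (Z * E - E * Z) + (1 / 2 : ℂ) • (Z * (N₀ + H) - (N₀ + H) * Z) := by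
          simp only [mul_add, add_mul, mul_smul_comm, smul_mul_assoc, smul_sub]; abel
      _ = algebraMap ℂ 𝒜 (Complex.I * ℏ) := by rw [hZA, sub_self, smul_zero, add_zero, hZE]
  · have hZA : Z * (N₀ + H) = (N₀ + H) * Z := by rw [mul_add, add_mul, hZN₀, hZH]
    have c1 : Z * ((N₀ + H) * (N₀ + H)) = (N₀ + H) * (N₀ + H) * Z := by
      rw [← mul_assoc, hZA, mul_assoc, hZA, ← mul_assoc]
    have c2 : Z * (N₀ * H + H * N₀) = (N₀ * H + H * N₀) * Z := by
      have p : Z * (N₀ * H) = N₀ * H * Z := by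
        rw [← mul_assoc, hZN₀, mul_assoc, hZH, ← mul_assoc]
      have q : Z * (H * N₀) = H * N₀ * Z := by
        rw [← mul_assoc, hZH, mul_assoc, hZN₀, ← mul_assoc]
      rw [mul_add, add_mul, p, q]
    rw [mul_sub, sub_mul, mul_smul_comm, smul_mul_assoc, mul_smul_comm, smul_mul_assoc,
      c1, c2]
end

section
/- Let 𝒜 be a unital associative complex *-algebra, let ℏ ≠ 0 be real, and let Z, E ∈ 𝒜 satisfy Z* = Z, E* = E, and [Z, E] = iℏ·1. Let g, h, N₀, H ∈ 𝒜 all commute with Z and be self-adjoint (g* = g, h* = h, N₀* = N₀, H* = H), and assume (E + g)² − h = (E + N₀)·(E + H) and [H, E] = [N₀, E] + [N₀, H]. Then g = (1/2)·(N₀ + H), h = (1/4)·(N₀ − H)², [E + g, N₀ − H] = 0, and [E + g, h] = 0. -/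
/-- A relativistic constraint (E + g)² − h deparameterizable by
factorization as (E + N₀)·(E + H) with the compatibility condition
[H, E] = [N₀, E] + [N₀, H] satisfies g = ½(N₀ + H), h = ¼(N₀ − H)²,
[E + g, N₀ − H] = 0 and [E + g, h] = 0. -/
theorem stmt_18 {𝒜 : Type*} [Ring 𝒜] [Algebra ℂ 𝒜] [StarRing 𝒜] [StarModule ℂ 𝒜]
    (ℏ : ℝ) (hℏ : ℏ ≠ 0) (Z E g h N₀ H : 𝒜)
    (hZ : star Z = Z) (hE : star E = E)
    (hZE : Z * E - E * Z = algebraMap ℂ 𝒜 (Complex.I * ℏ))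
    (hZg : Z * g = g * Z) (hZh : Z * h = h * Z)
    (hZN₀ : Z * N₀ = N₀ * Z) (hZH : Z * H = H * Z)
    (hg : star g = g) (hh : star h = h) (hN₀ : star N₀ = N₀) (hH : star H = H)
    (heq : (E + g) * (E + g) - h = (E + N₀) * (E + H))
    (hcond : H * E - E * H = (N₀ * E - E * N₀) + (N₀ * H - H * N₀)) :
    g = (1 / 2 : ℂ) • (N₀ + H) ∧
    h = (1 / 4 : ℂ) • ((N₀ - H) * (N₀ - H)) ∧
    (E + g) * (N₀ - H) - (N₀ - H) * (E + g) = 0 ∧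
    (E + g) * h - h * (E + g) = 0 := by
  set z : ℂ := Complex.I * ℏ with hzdef
  set c : 𝒜 := algebraMap ℂ 𝒜 z with hcdef
  have hz : z ≠ 0 := mul_ne_zero Complex.I_ne_zero (by exact_mod_cast hℏ)
  have hcc : ∀ x : 𝒜, c * x = x * c := fun x => Algebra.commutes z x
  have hZE' : Z * E = c + E * Z := eq_add_of_sub_eq hZE
  -- Z commutation with the three linear factors
  have hZA : Z * (E + g) = (E + g) * Z + c := by
    rw [mul_add, add_mul, hZE', hZg]; abel
  have hZB : Z * (E + N₀) = (E + N₀) * Z + c := by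
    rw [mul_add, add_mul, hZE', hZN₀]; abel
  have hZC : Z * (E + H) = (E + H) * Z + c := by
    rw [mul_add, add_mul, hZE', hZH]; abel
  -- commutator of Z with the two sides of heq
  have e1 : Z * ((E + g) * (E + g) - h) - ((E + g) * (E + g) - h) * Z
      = Z * ((E + N₀) * (E + H)) - ((E + N₀) * (E + H)) * Z := by rw [heq]
  have lhs_eq : Z * ((E + g) * (E + g) - h) - ((E + g) * (E + g) - h) * Z
      = c * (E + g) + (E + g) * c := by
    rw [mul_sub, sub_mul, ← mul_assoc, hZA, add_mul, mul_assoc, hZA, hZh]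
    noncomm_ring
  have rhs_eq : Z * ((E + N₀) * (E + H)) - ((E + N₀) * (E + H)) * Z
      = c * (E + H) + (E + N₀) * c := by
    rw [← mul_assoc, hZB, add_mul, mul_assoc, hZC]
    noncomm_ring
  have e2 : c * (E + g) + (E + g) * c = c * (E + H) + (E + N₀) * c := by
    rw [← lhs_eq, ← rhs_eq]; exact e1
  have e3 : c * (g + g - N₀ - H) = 0 := by
    have : c * (g + g - N₀ - H)
        = (c * (E + g) + (E + g) * c) - (c * (E + H) + (E + N₀) * c) := by
      rw [← hcc (E + g), ← hcc (E + N₀)]; noncomm_ring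
    rw [this, e2, sub_self]
  have e4 : z • (g + g - N₀ - H) = 0 := by
    rw [Algebra.smul_def]; exact e3
  have hgg : g + g - N₀ - H = 0 := by
    have := congrArg (fun y => z⁻¹ • y) e4
    simpa [smul_smul, inv_mul_cancel₀ hz] using this
  have hs : g + g = N₀ + H := by rwa [sub_sub, sub_eq_zero] at hgg
  have hgeq : g = (1 / 2 : ℂ) • (N₀ + H) := by
    rw [← hs, ← two_smul ℂ g, smul_smul]
    norm_num
  -- h = h expression
  have hP : h = (E + g) * (E + g) - (E + N₀) * (E + H) := by
    rw [← heq]; abel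
  have hA : (E + g) + (E + g) = E + E + N₀ + H := by rw [show (E+g)+(E+g) = E+E+(g+g) by abel, hs]; abel
  have h4 : h + h + h + h = (N₀ - H) * (N₀ - H) := by
    have t1 : h + h + h + h
        = ((E + g) + (E + g)) * ((E + g) + (E + g))
          - ((E + N₀) * (E + H) + (E + N₀) * (E + H) + (E + N₀) * (E + H)
            + (E + N₀) * (E + H)) := by
      rw [hP]; noncomm_ring
    rw [hA] at t1
    have t2 : (E + E + N₀ + H) * (E + E + N₀ + H)
          - ((E + N₀) * (E + H) + (E + N₀) * (E + H) + (E + N₀) * (E + H)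
            + (E + N₀) * (E + H)) - (N₀ - H) * (N₀ - H)
        = (H * E - E * H - ((N₀ * E - E * N₀) + (N₀ * H - H * N₀)))
          + (H * E - E * H - ((N₀ * E - E * N₀) + (N₀ * H - H * N₀))) := by
      noncomm_ring
    rw [hcond, sub_self, add_zero, sub_eq_zero] at t2
    rw [t1, t2]
  have hheq : h = (1 / 4 : ℂ) • ((N₀ - H) * (N₀ - H)) := by
    rw [← h4]
    have : h + h + h + h = (4 : ℂ) • h := by
      rw [show (4:ℂ) = 2 * 2 by norm_num, ← smul_smul, two_smul ℂ h, two_smul ℂ (h + h)]; abel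
    rw [this, smul_smul]
    norm_num
  -- third claim
  have hD : (E + g) * (N₀ - H) - (N₀ - H) * (E + g) = 0 := by
    have t1 : ((E + g) * (N₀ - H) - (N₀ - H) * (E + g))
          + ((E + g) * (N₀ - H) - (N₀ - H) * (E + g))
        = ((E + g) + (E + g)) * (N₀ - H) - (N₀ - H) * ((E + g) + (E + g)) := by
      noncomm_ring
    rw [hA] at t1
    have t2 : (E + E + N₀ + H) * (N₀ - H) - (N₀ - H) * (E + E + N₀ + H)
        = (H * E - E * H - ((N₀ * E - E * N₀) + (N₀ * H - H * N₀)))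
          + (H * E - E * H - ((N₀ * E - E * N₀) + (N₀ * H - H * N₀))) := by
      noncomm_ring
    rw [hcond, sub_self, add_zero] at t2
    rw [t2] at t1
    have := congrArg (fun y => (1/2 : ℂ) • y) t1
    simpa [← two_smul ℂ, smul_smul] using this
  have hcomm : (E + g) * (N₀ - H) = (N₀ - H) * (E + g) := by
    rwa [sub_eq_zero] at hD
  -- fourth claim
  have hDh : (E + g) * h - h * (E + g) = 0 := by
    rw [hheq, mul_smul_comm, smul_mul_assoc, ← mul_assoc, hcomm, mul_assoc, hcomm,
      ← mul_assoc, sub_self]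
  exact ⟨hgeq, hheq, hD, hDh⟩
end

section
/- Let 𝒜 be a unital associative complex *-algebra, let ℏ be real, and let Z, E ∈ 𝒜 satisfy Z* = Z, E* = E, and [Z, E] = iℏ·1. Let B₀, B₁ ∈ 𝒜 satisfy B₀* = B₀, B₁* = B₁, [Z, B₀] = [Z, B₁] = 0, with B₁ invertible in 𝒜. Define C := (1/2)·(B₁·E + E·B₁) + B₀, H := (1/2)·(B₁⁻¹·B₀ + B₀·B₁⁻¹), and E' := E + (1/2)·[B₁⁻¹, B₀] − (1/2)·B₁⁻¹·[B₁, E]. Then C = B₁·(E' + H), H* = H, [Z, E'] = iℏ·1, and E'* = E − (1/2)·[B₁⁻¹, B₀] + (1/2)·[B₁, E]·B₁⁻¹. -/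
/-- The non-relativistic constraint of non-constant flow rate
C := ½(B₁E + EB₁) + B₀ factorizes as C = B₁·(E' + H) with
H := ½(B₁⁻¹B₀ + B₀B₁⁻¹) self-adjoint and
E' := E + ½[B₁⁻¹, B₀] − ½B₁⁻¹[B₁, E] canonically conjugate to Z, but
E'* = E − ½[B₁⁻¹, B₀] + ½[B₁, E]B₁⁻¹ (so E' is in general not self-adjoint). -/
theorem stmt_19 {𝒜 : Type*} [Ring 𝒜] [Algebra ℂ 𝒜] [StarRing 𝒜] [StarModule ℂ 𝒜]
    (ℏ : ℝ) (Z E B₀ B₁ B₁inv C H E' : 𝒜)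
    (hZ : star Z = Z) (hE : star E = E)
    (hZE : Z * E - E * Z = algebraMap ℂ 𝒜 (Complex.I * ℏ))
    (hB₀ : star B₀ = B₀) (hB₁ : star B₁ = B₁)
    (hZB₀ : Z * B₀ = B₀ * Z) (hZB₁ : Z * B₁ = B₁ * Z)
    (hinv₁ : B₁ * B₁inv = 1) (hinv₂ : B₁inv * B₁ = 1)
    (hC : C = (1 / 2 : ℂ) • (B₁ * E + E * B₁) + B₀)
    (hH : H = (1 / 2 : ℂ) • (B₁inv * B₀ + B₀ * B₁inv))
    (hE' : E' = E + (1 / 2 : ℂ) • (B₁inv * B₀ - B₀ * B₁inv)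
        - (1 / 2 : ℂ) • (B₁inv * (B₁ * E - E * B₁))) :
    C = B₁ * (E' + H) ∧
    star H = H ∧
    Z * E' - E' * Z = algebraMap ℂ 𝒜 (Complex.I * ℏ) ∧
    star E' = E - (1 / 2 : ℂ) • (B₁inv * B₀ - B₀ * B₁inv)
        + (1 / 2 : ℂ) • ((B₁ * E - E * B₁) * B₁inv) := by
  -- star of the inverse
  have hBinv : star B₁inv = B₁inv := by
    have h1 : B₁ * star B₁inv = 1 := by
      have := congrArg star hinv₂
      simpa [star_mul, hB₁] using this
    calc star B₁inv = (B₁inv * B₁) * star B₁inv := by rw [hinv₂, one_mul]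
      _ = B₁inv * (B₁ * star B₁inv) := by rw [mul_assoc]
      _ = B₁inv := by rw [h1, mul_one]
  -- Z commutes with the inverse
  have hZBinv : Z * B₁inv = B₁inv * Z := by
    calc Z * B₁inv = (B₁inv * B₁) * (Z * B₁inv) := by rw [hinv₂, one_mul]
      _ = B₁inv * ((B₁ * Z) * B₁inv) := by noncomm_ring
      _ = B₁inv * ((Z * B₁) * B₁inv) := by rw [hZB₁]
      _ = B₁inv * (Z * (B₁ * B₁inv)) := by noncomm_ring
      _ = B₁inv * Z := by rw [hinv₁, mul_one]
  set c : 𝒜 := algebraMap ℂ 𝒜 (Complex.I * ℏ) with hc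
  have hcomm : ∀ x : 𝒜, c * x = x * c := fun x => Algebra.commutes _ x
  have hZEc : Z * E = E * Z + c := by
    have := hZE; linear_combination (norm := noncomm_ring) this
  refine ⟨?_, ?_, ?_, ?_⟩
  · subst hC hH hE'
    have h1 : B₁ * (B₁inv * B₀) = B₀ := by rw [← mul_assoc, hinv₁, one_mul]
    have h2 : B₁ * (B₁inv * (B₁ * E - E * B₁)) = B₁ * E - E * B₁ := by
      rw [← mul_assoc, hinv₁, one_mul]
    calc (1 / 2 : ℂ) • (B₁ * E + E * B₁) + B₀
        = B₁ * E + (1 / 2 : ℂ) • (B₁ * (B₁inv * B₀) - B₁ * (B₀ * B₁inv))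
          - (1 / 2 : ℂ) • (B₁ * (B₁inv * (B₁ * E - E * B₁)))
          + (1 / 2 : ℂ) • (B₁ * (B₁inv * B₀) + B₁ * (B₀ * B₁inv)) := by
          rw [h1, h2]; module
      _ = B₁ * (E + (1 / 2 : ℂ) • (B₁inv * B₀ - B₀ * B₁inv)
          - (1 / 2 : ℂ) • (B₁inv * (B₁ * E - E * B₁))
          + (1 / 2 : ℂ) • (B₁inv * B₀ + B₀ * B₁inv)) := by
          simp only [mul_add, mul_sub, mul_smul_comm]
  · subst hH
    simp [star_smul, star_add, star_mul, hB₀, hBinv]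
    module
  · subst hE'
    have h3 : Z * (B₁inv * B₀ - B₀ * B₁inv) = (B₁inv * B₀ - B₀ * B₁inv) * Z := by
      calc Z * (B₁inv * B₀ - B₀ * B₁inv) = (Z * B₁inv) * B₀ - (Z * B₀) * B₁inv := by
            noncomm_ring
        _ = (B₁inv * Z) * B₀ - (B₀ * Z) * B₁inv := by rw [hZBinv, hZB₀]
        _ = B₁inv * (Z * B₀) - B₀ * (Z * B₁inv) := by noncomm_ring
        _ = B₁inv * (B₀ * Z) - B₀ * (B₁inv * Z) := by rw [hZBinv, hZB₀]
        _ = (B₁inv * B₀ - B₀ * B₁inv) * Z := by noncomm_ring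
    have h4 : Z * (B₁inv * (B₁ * E - E * B₁)) = (B₁inv * (B₁ * E - E * B₁)) * Z := by
      calc Z * (B₁inv * (B₁ * E - E * B₁))
          = (Z * B₁inv) * (B₁ * E - E * B₁) := by noncomm_ring
        _ = B₁inv * (B₁ * (Z * E) - (Z * E) * B₁) := by
            rw [hZBinv]
            calc (B₁inv * Z) * (B₁ * E - E * B₁)
                = B₁inv * ((Z * B₁) * E - (Z * E) * B₁) := by noncomm_ring
              _ = B₁inv * ((B₁ * Z) * E - (Z * E) * B₁) := by rw [hZB₁]
              _ = B₁inv * (B₁ * (Z * E) - (Z * E) * B₁) := by noncomm_ring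
        _ = B₁inv * (B₁ * (E * Z + c) - (E * Z + c) * B₁) := by rw [hZEc]
        _ = B₁inv * (B₁ * (E * Z) - (E * Z) * B₁) + B₁inv * (B₁ * c - c * B₁) := by
            noncomm_ring
        _ = B₁inv * (B₁ * (E * Z) - (E * Z) * B₁) := by
            rw [← hcomm B₁]; noncomm_ring
        _ = B₁inv * ((B₁ * E) * Z - E * (Z * B₁)) := by noncomm_ring
        _ = B₁inv * ((B₁ * E) * Z - E * (B₁ * Z)) := by rw [hZB₁]
        _ = (B₁inv * (B₁ * E - E * B₁)) * Z := by noncomm_ring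
    calc Z * (E + (1 / 2 : ℂ) • (B₁inv * B₀ - B₀ * B₁inv)
          - (1 / 2 : ℂ) • (B₁inv * (B₁ * E - E * B₁)))
        - (E + (1 / 2 : ℂ) • (B₁inv * B₀ - B₀ * B₁inv)
          - (1 / 2 : ℂ) • (B₁inv * (B₁ * E - E * B₁))) * Z
        = (Z * E - E * Z)
          + (1 / 2 : ℂ) • (Z * (B₁inv * B₀ - B₀ * B₁inv)
              - (B₁inv * B₀ - B₀ * B₁inv) * Z)
          - (1 / 2 : ℂ) • (Z * (B₁inv * (B₁ * E - E * B₁))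
              - (B₁inv * (B₁ * E - E * B₁)) * Z) := by
          simp only [mul_add, add_mul, mul_sub, sub_mul, mul_smul_comm, smul_mul_assoc,
            smul_sub]
          abel
      _ = c := by rw [h3, h4, hZE]; simp
  · subst hE'
    simp only [star_sub, star_add, star_smul, star_mul, hE, hB₀, hB₁, hBinv,
      Complex.star_def, map_div₀, Complex.conj_ofNat, map_one, sub_mul, mul_sub]
    module
end
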